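/- arXiv:2202.09340 — 2 statements merged into one kernel-verified Lean document; each statement's English description precedes it below -/
import Mathlib

section
/- Let f : ℝ^d → ℝ be a bounded measurable function, σ > 0, and u(x) = E_{δ∼N(0,σ²I)}[f(x+δ)]. Then the Laplacian of u satisfies Δu(x) = E_{δ∼N(0,σ²I)}[((‖δ‖² − σ²d)/σ⁴) · f(x+δ)] for every x ∈ ℝ^d. -/
open MeasureTheory Real

/-- The Gaussian probability measure `N(0, σ²I)` on `ℝ^d`, defined via its density
with respect to the Lebesgue measure. -/
noncomputable def gaussianMeasure (d : ℕ) (σ : ℝ) :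
    Measure (EuclideanSpace ℝ (Fin d)) :=
  volume.withDensity fun δ =>
    ENNReal.ofReal ((2 * π * σ ^ 2) ^ (-(d : ℝ) / 2) * Real.exp (-‖δ‖ ^ 2 / (2 * σ ^ 2)))

/-!
Write `u = f ⋆ g` with `g` the Gaussian density. Every derivative of `g` is a polynomial times
`g`, hence bounded by `K exp (-‖z‖² / (4σ²))`, and such a bound survives a translation by less
than `1` at the cost of halving the exponent. Since `f` is bounded this dominates the difference
quotients, so both derivatives fall on `g`: `∂ᵥ²u = f ⋆ ∂ᵥ²g` with
`∂ᵥ²g z = (⟪z, v⟫² / σ⁴ - ‖v‖² / σ²) g z`. Summing over an orthonormal basis (Parseval) gives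
`Δg z = (‖z‖² - σ² d) / σ⁴ · g z`, and undoing the change of variables `y = x + δ` gives the
expectation.
-/

open Asymptotics Filter Module
open scoped RealInnerProductSpace

theorem exp_neg_mul_norm_sub_sq_le {G : Type*} [SeminormedAddCommGroup G] {b : ℝ} (hb : 0 ≤ b)
    {x x₀ : G} (hx : ‖x - x₀‖ < 1) (y : G) :
    exp (-b * ‖x - y‖ ^ 2) ≤ exp b * exp (-(b / 2) * ‖x₀ - y‖ ^ 2) := by
  rw [← exp_add, exp_le_exp]
  have htri : ‖x₀ - y‖ ≤ 1 + ‖x - y‖ := by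
    have := norm_sub_le_norm_sub_add_norm_sub x₀ x y
    rw [norm_sub_rev x₀ x] at this
    linarith
  have hsq : ‖x₀ - y‖ ^ 2 ≤ 2 + 2 * ‖x - y‖ ^ 2 := by
    nlinarith [norm_nonneg (x₀ - y), sq_nonneg (‖x - y‖ - 1)]
  nlinarith

theorem one_add_sq_mul_exp_le {b : ℝ} (hb : 0 < b) (t : ℝ) :
    (1 + t ^ 2) * exp (-(2 * b) * t ^ 2) ≤ (1 + b⁻¹) * exp (-b * t ^ 2) := by
  have hsplit : exp (-(2 * b) * t ^ 2) = exp (-b * t ^ 2) * exp (-b * t ^ 2) := by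
    rw [← exp_add]
    ring_nf
  have hle_one : exp (-b * t ^ 2) ≤ 1 := exp_le_one_iff.2 (by nlinarith [sq_nonneg t])
  have hsq : t ^ 2 * exp (-b * t ^ 2) ≤ b⁻¹ := by
    have h := (mul_exp_neg_le_exp_neg_one (b * t ^ 2)).trans (exp_le_one_iff.2 (by norm_num))
    rw [← neg_mul, mul_assoc] at h
    rwa [← le_inv_mul_iff₀ hb, mul_one] at h
  rw [hsplit]
  nlinarith [exp_pos (-b * t ^ 2)]

section Convolution

variable {V : Type*} [NormedAddCommGroup V] [InnerProductSpace ℝ V] [FiniteDimensional ℝ V]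
  [MeasurableSpace V] [BorelSpace V] {f : V → ℝ} {C b : ℝ}

theorem integrable_exp_neg_mul_norm_sq (hb : 0 < b) :
    Integrable fun v : V => exp (-b * ‖v‖ ^ 2) := by
  have := GaussianFourier.integrable_cexp_neg_mul_sq_norm_add (V := V) (b := b)
    (by simpa using hb) 0 0
  simp only [zero_mul, add_zero] at this
  refine this.norm.congr (ae_of_all _ fun v => ?_)
  simp only [Complex.norm_exp]
  norm_cast

theorem integrable_smul_sub_of_isBigO {E : Type*} [NormedAddCommGroup E] [NormedSpace ℝ E]
    (hf : AEStronglyMeasurable f) (hfC : ∀ x, ‖f x‖ ≤ C) {φ : V → E} (hφ : Continuous φ)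
    (hb : 0 < b) (hφb : φ =O[⊤] fun z => exp (-b * ‖z‖ ^ 2)) (x : V) :
    Integrable fun y => f y • φ (x - y) :=
  ((hφb.integrable hφ.aestronglyMeasurable (integrable_exp_neg_mul_norm_sq hb)).comp_sub_left
    x).bdd_smul C hf (ae_of_all _ hfC)

theorem hasFDerivAt_integral_mul_sub (hf : AEStronglyMeasurable f) (hfC : ∀ x, ‖f x‖ ≤ C)
    {φ : V → ℝ} {φ' : V → V →L[ℝ] ℝ} (hφ : ∀ z, HasFDerivAt φ (φ' z) z)
    (hφ' : Continuous φ') (hb : 0 < b) (hφb : φ =O[⊤] fun z => exp (-b * ‖z‖ ^ 2))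
    (hφ'b : φ' =O[⊤] fun z => exp (-b * ‖z‖ ^ 2)) (x₀ : V) :
    HasFDerivAt (fun x => ∫ y, f y * φ (x - y)) (∫ y, f y • φ' (x₀ - y)) x₀ := by
  obtain ⟨K, hK, hφ'K⟩ := hφ'b.exists_nonneg
  have hC : 0 ≤ C := (norm_nonneg _).trans (hfC 0)
  have hφc : Continuous φ := continuous_iff_continuousAt.2 fun z => (hφ z).continuousAt
  refine hasFDerivAt_integral_of_dominated_of_fderiv_le (F' := fun x y => f y • φ' (x - y))
    (bound := fun y => C * K * exp b * exp (-(b / 2) * ‖x₀ - y‖ ^ 2))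
    (Metric.ball_mem_nhds x₀ one_pos) ?_ (integrable_smul_sub_of_isBigO hf hfC hφc hb hφb x₀)
    (integrable_smul_sub_of_isBigO hf hfC hφ' hb hφ'b x₀).aestronglyMeasurable ?_ ?_ ?_
  · exact Eventually.of_forall fun x =>
      hf.mul (hφc.comp (continuous_const.sub continuous_id)).aestronglyMeasurable
  · refine ae_of_all _ fun y x hx => ?_
    have hdom := exp_neg_mul_norm_sub_sq_le hb.le (mem_ball_iff_norm.1 hx) y
    have hφ'y := isBigOWith_top.1 hφ'K (x - y)
    rw [Real.norm_of_nonneg (exp_pos _).le] at hφ'y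
    calc ‖f y • φ' (x - y)‖ = ‖f y‖ * ‖φ' (x - y)‖ := norm_smul _ _
      _ ≤ C * (K * exp (-b * ‖x - y‖ ^ 2)) := by gcongr; exact hfC y
      _ ≤ C * (K * (exp b * exp (-(b / 2) * ‖x₀ - y‖ ^ 2))) := by gcongr
      _ = C * K * exp b * exp (-(b / 2) * ‖x₀ - y‖ ^ 2) := by ring
  · exact ((integrable_exp_neg_mul_norm_sq (half_pos hb)).comp_sub_left x₀).const_mul _
  · refine ae_of_all _ fun y x _ => ?_
    simpa using ((hφ (x - y)).comp x ((hasFDerivAt_id x).sub_const y)).const_mul (f y)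

theorem fderiv_integral_mul_sub_apply (hf : AEStronglyMeasurable f) (hfC : ∀ x, ‖f x‖ ≤ C)
    {φ : V → ℝ} {φ' : V → V →L[ℝ] ℝ} (hφ : ∀ z, HasFDerivAt φ (φ' z) z)
    (hφ' : Continuous φ') (hb : 0 < b) (hφb : φ =O[⊤] fun z => exp (-b * ‖z‖ ^ 2))
    (hφ'b : φ' =O[⊤] fun z => exp (-b * ‖z‖ ^ 2)) (x v : V) :
    fderiv ℝ (fun x => ∫ y, f y * φ (x - y)) x v = ∫ y, f y * φ' (x - y) v := by
  rw [(hasFDerivAt_integral_mul_sub hf hfC hφ hφ' hb hφb hφ'b x).fderiv,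
    ContinuousLinearMap.integral_apply (integrable_smul_sub_of_isBigO hf hfC hφ' hb hφ'b x)]
  rfl

end Convolution

section GaussianDensity

variable {V : Type*} [NormedAddCommGroup V] [InnerProductSpace ℝ V] {σ : ℝ}

noncomputable def gaussianDensity (σ : ℝ) (z : V) : ℝ :=
  (2 * π * σ ^ 2) ^ (-(finrank ℝ V : ℝ) / 2) * exp (-‖z‖ ^ 2 / (2 * σ ^ 2))

noncomputable def gaussianDensity' (σ : ℝ) (z : V) : V →L[ℝ] ℝ :=
  -(gaussianDensity σ z / σ ^ 2) • innerSL ℝ z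

noncomputable def gaussianDensity'' (σ : ℝ) (v z : V) : V →L[ℝ] ℝ :=
  -(⟪z, v⟫ / σ ^ 2) • gaussianDensity' σ z - (gaussianDensity σ z / σ ^ 2) • innerSL ℝ v

theorem gaussianDensity_nonneg (σ : ℝ) (z : V) : 0 ≤ gaussianDensity σ z :=
  mul_nonneg (rpow_nonneg (by positivity) _) (exp_pos _).le

theorem gaussianDensity_neg (σ : ℝ) (z : V) : gaussianDensity σ (-z) = gaussianDensity σ z := by
  rw [gaussianDensity, gaussianDensity, norm_neg]

theorem continuous_gaussianDensity : Continuous (gaussianDensity (V := V) σ) := by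
  unfold gaussianDensity
  fun_prop

theorem continuous_gaussianDensity' : Continuous (gaussianDensity' (V := V) σ) := by
  have := continuous_gaussianDensity (V := V) (σ := σ)
  unfold gaussianDensity'
  fun_prop

theorem continuous_gaussianDensity'' (v : V) : Continuous (gaussianDensity'' σ v) := by
  have := continuous_gaussianDensity (V := V) (σ := σ)
  have := continuous_gaussianDensity' (V := V) (σ := σ)
  unfold gaussianDensity''
  fun_prop

theorem gaussianDensity'_apply (z v : V) :
    gaussianDensity' σ z v = -(⟪z, v⟫ / σ ^ 2) * gaussianDensity σ z := by
  simp only [gaussianDensity', smul_apply, innerSL_apply_apply, smul_eq_mul]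
  ring

theorem gaussianDensity''_apply_self (v z : V) :
    gaussianDensity'' σ v z v =
      (⟪z, v⟫ ^ 2 / σ ^ 4 - ‖v‖ ^ 2 / σ ^ 2) * gaussianDensity σ z := by
  simp only [gaussianDensity'', sub_apply, smul_apply,
    gaussianDensity'_apply, innerSL_apply_apply, real_inner_self_eq_norm_sq, smul_eq_mul]
  ring

theorem hasFDerivAt_gaussianDensity (z : V) :
    HasFDerivAt (gaussianDensity σ) (gaussianDensity' σ z) z := by
  have hexponent : ∀ y : V, -‖y‖ ^ 2 / (2 * σ ^ 2) = -(2 * σ ^ 2)⁻¹ * ‖y‖ ^ 2 := fun y => by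
    ring
  have hexp := (((hasStrictFDerivAt_norm_sq z).hasFDerivAt.const_mul
    (-(2 * σ ^ 2)⁻¹)).exp).const_mul ((2 * π * σ ^ 2) ^ (-(finrank ℝ V : ℝ) / 2))
  simp only [← hexponent] at hexp
  refine hexp.congr_fderiv ?_
  ext w
  simp only [gaussianDensity', gaussianDensity, smul_apply,
    innerSL_apply_apply, smul_eq_mul]
  ring

theorem hasFDerivAt_gaussianDensity'_apply (v z : V) :
    HasFDerivAt (fun z => gaussianDensity' σ z v) (gaussianDensity'' σ v z) z := by
  have hinner : HasFDerivAt (fun z : V => ⟪z, v⟫) (innerSL ℝ v) z := by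
    convert (innerSL ℝ v).hasFDerivAt using 1
    funext y
    rw [innerSL_apply_apply, real_inner_comm]
  have hfun : (fun z => gaussianDensity' σ z v) =
      (fun y => -(σ ^ 2)⁻¹ * ⟪y, v⟫) * gaussianDensity σ := by
    funext y
    simp only [gaussianDensity'_apply, Pi.mul_apply]
    ring
  rw [hfun]
  refine ((hinner.const_mul _).mul (hasFDerivAt_gaussianDensity z)).congr_fderiv ?_
  ext w
  simp only [gaussianDensity'', sub_apply, smul_apply, add_apply, gaussianDensity'_apply,
    innerSL_apply_apply, smul_eq_mul]
  ring

theorem norm_gaussianDensity' (z : V) :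
    ‖gaussianDensity' σ z‖ = gaussianDensity σ z / σ ^ 2 * ‖z‖ := by
  rw [gaussianDensity', norm_smul, innerSL_apply_norm, norm_neg, Real.norm_of_nonneg
    (div_nonneg (gaussianDensity_nonneg σ z) (sq_nonneg σ))]

theorem sum_gaussianDensity''_apply_self {ι : Type*} [Fintype ι] (hσ : σ ≠ 0)
    (b : OrthonormalBasis ι ℝ V) (z : V) :
    ∑ i, gaussianDensity'' σ (b i) z (b i) =
      (‖z‖ ^ 2 - σ ^ 2 * Fintype.card ι) / σ ^ 4 * gaussianDensity σ z := by
  simp only [gaussianDensity''_apply_self, b.norm_eq_one, ← Finset.sum_mul,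
    Finset.sum_sub_distrib, ← Finset.sum_div, b.sum_sq_inner_left, Finset.sum_const,
    Finset.card_univ, nsmul_eq_mul]
  field_simp

theorem isBigO_one_add_sq_mul_gaussianDensity (hσ : σ ≠ 0) :
    (fun z : V => (1 + ‖z‖ ^ 2) * gaussianDensity σ z) =O[⊤]
      fun z : V => exp (-(4 * σ ^ 2)⁻¹ * ‖z‖ ^ 2) := by
  have hb : 0 < (4 * σ ^ 2)⁻¹ := by positivity
  set c := (2 * π * σ ^ 2) ^ (-(finrank ℝ V : ℝ) / 2)
  have hc : 0 ≤ c := rpow_nonneg (by positivity) _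
  refine isBigO_top.2 ⟨c * (1 + (4 * σ ^ 2)⁻¹⁻¹), fun z => ?_⟩
  have hexponent : -‖z‖ ^ 2 / (2 * σ ^ 2) = -(2 * (4 * σ ^ 2)⁻¹) * ‖z‖ ^ 2 := by
    field_simp
    ring
  rw [Real.norm_of_nonneg (mul_nonneg (by positivity) (gaussianDensity_nonneg σ z)),
    Real.norm_of_nonneg (exp_pos _).le, gaussianDensity, hexponent]
  linarith [mul_le_mul_of_nonneg_left (one_add_sq_mul_exp_le hb ‖z‖) hc]

theorem isBigO_of_le_one_add_sq_mul_gaussianDensity (hσ : σ ≠ 0) {E : Type*}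
    [SeminormedAddCommGroup E] {ψ : V → E} {A : ℝ}
    (hψ : ∀ z, ‖ψ z‖ ≤ A * ((1 + ‖z‖ ^ 2) * gaussianDensity σ z)) :
    ψ =O[⊤] fun z : V => exp (-(4 * σ ^ 2)⁻¹ * ‖z‖ ^ 2) :=
  (isBigO_top.2 ⟨A, fun z => by
    rw [Real.norm_of_nonneg (mul_nonneg (by positivity) (gaussianDensity_nonneg σ z))]
    exact hψ z⟩).trans
    (isBigO_one_add_sq_mul_gaussianDensity hσ)

theorem isBigO_gaussianDensity (hσ : σ ≠ 0) :
    gaussianDensity σ =O[⊤] fun z : V => exp (-(4 * σ ^ 2)⁻¹ * ‖z‖ ^ 2) :=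
  isBigO_of_le_one_add_sq_mul_gaussianDensity hσ (A := 1) fun z => by
    rw [Real.norm_of_nonneg (gaussianDensity_nonneg σ z)]
    nlinarith [gaussianDensity_nonneg σ z, sq_nonneg ‖z‖]

theorem isBigO_gaussianDensity' (hσ : σ ≠ 0) :
    gaussianDensity' σ =O[⊤] fun z : V => exp (-(4 * σ ^ 2)⁻¹ * ‖z‖ ^ 2) :=
  isBigO_of_le_one_add_sq_mul_gaussianDensity hσ (A := (σ ^ 2)⁻¹) fun z => by
    have hz : ‖z‖ ≤ 1 + ‖z‖ ^ 2 := by nlinarith [sq_nonneg (‖z‖ - 1)]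
    rw [norm_gaussianDensity', div_mul_eq_mul_div, div_eq_inv_mul,
      mul_comm (gaussianDensity σ z)]
    gcongr
    exact gaussianDensity_nonneg σ z

theorem isBigO_gaussianDensity'_apply (hσ : σ ≠ 0) (v : V) :
    (fun z => gaussianDensity' σ z v) =O[⊤] fun z : V => exp (-(4 * σ ^ 2)⁻¹ * ‖z‖ ^ 2) :=
  ((ContinuousLinearMap.apply ℝ ℝ v).isBigO_comp _ _).trans (isBigO_gaussianDensity' hσ)

theorem isBigO_gaussianDensity'' (hσ : σ ≠ 0) (v : V) :
    gaussianDensity'' σ v =O[⊤] fun z : V => exp (-(4 * σ ^ 2)⁻¹ * ‖z‖ ^ 2) :=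
  isBigO_of_le_one_add_sq_mul_gaussianDensity hσ (A := ‖v‖ * (σ ^ 2)⁻¹ * ((σ ^ 2)⁻¹ + 1))
    fun z => by
    have hg := gaussianDensity_nonneg σ z
    have hgap : 0 ≤ ‖v‖ * (σ ^ 2)⁻¹ * gaussianDensity σ z * ((σ ^ 2)⁻¹ + ‖z‖ ^ 2) := by
      positivity
    calc ‖gaussianDensity'' σ v z‖
        ≤ ‖-(⟪z, v⟫ / σ ^ 2) • gaussianDensity' σ z‖ +
          ‖(gaussianDensity σ z / σ ^ 2) • innerSL ℝ v‖ := norm_sub_le _ _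
      _ = |⟪z, v⟫| / σ ^ 2 * (gaussianDensity σ z / σ ^ 2 * ‖z‖) +
          gaussianDensity σ z / σ ^ 2 * ‖v‖ := by
        rw [norm_smul, norm_smul, norm_gaussianDensity', innerSL_apply_norm, norm_neg,
          Real.norm_eq_abs, Real.norm_eq_abs, abs_div, abs_div, abs_of_nonneg hg,
          abs_of_nonneg (sq_nonneg σ)]
      _ ≤ ‖z‖ * ‖v‖ / σ ^ 2 * (gaussianDensity σ z / σ ^ 2 * ‖z‖) +
          gaussianDensity σ z / σ ^ 2 * ‖v‖ := by
        gcongr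
        exact abs_real_inner_le_norm z v
      _ ≤ ‖v‖ * (σ ^ 2)⁻¹ * ((σ ^ 2)⁻¹ + 1) * ((1 + ‖z‖ ^ 2) * gaussianDensity σ z) := by
        have hgap_eq :
            ‖v‖ * (σ ^ 2)⁻¹ * ((σ ^ 2)⁻¹ + 1) * ((1 + ‖z‖ ^ 2) * gaussianDensity σ z) -
              (‖z‖ * ‖v‖ / σ ^ 2 * (gaussianDensity σ z / σ ^ 2 * ‖z‖) +
                gaussianDensity σ z / σ ^ 2 * ‖v‖) =
              ‖v‖ * (σ ^ 2)⁻¹ * gaussianDensity σ z * ((σ ^ 2)⁻¹ + ‖z‖ ^ 2) := by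
          ring
        linarith

end GaussianDensity

section Laplacian

variable {V : Type*} [NormedAddCommGroup V] [InnerProductSpace ℝ V] [FiniteDimensional ℝ V]
  [MeasurableSpace V] [BorelSpace V] {f : V → ℝ} {C : ℝ}

theorem sum_fderiv_fderiv_integral_mul_gaussianDensity_sub {ι : Type*} [Fintype ι] {σ : ℝ}
    (hσ : σ ≠ 0) (hf : AEStronglyMeasurable f) (hfC : ∀ x, ‖f x‖ ≤ C)
    (b : OrthonormalBasis ι ℝ V) (x : V) :
    ∑ i, fderiv ℝ (fun y => fderiv ℝ (fun x => ∫ y, f y * gaussianDensity σ (x - y)) y (b i))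
        x (b i) =
      ∫ y, f y * ((‖x - y‖ ^ 2 - σ ^ 2 * Fintype.card ι) / σ ^ 4 * gaussianDensity σ (x - y)) := by
  have hb : 0 < (4 * σ ^ 2)⁻¹ := by positivity
  have hsecond : ∀ i, fderiv ℝ
      (fun y => fderiv ℝ (fun x => ∫ y, f y * gaussianDensity σ (x - y)) y (b i)) x (b i) =
      ∫ y, f y * gaussianDensity'' σ (b i) (x - y) (b i) := fun i => by
    simp_rw [fderiv_integral_mul_sub_apply hf hfC hasFDerivAt_gaussianDensity
      continuous_gaussianDensity' hb (isBigO_gaussianDensity hσ) (isBigO_gaussianDensity' hσ)]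
    exact fderiv_integral_mul_sub_apply hf hfC (hasFDerivAt_gaussianDensity'_apply _)
      (continuous_gaussianDensity'' _) hb (isBigO_gaussianDensity'_apply hσ _)
      (isBigO_gaussianDensity'' hσ _) x _
  have hint : ∀ i, Integrable fun y => f y * gaussianDensity'' σ (b i) (x - y) (b i) := fun i =>
    (integrable_smul_sub_of_isBigO hf hfC (continuous_gaussianDensity'' _) hb
      (isBigO_gaussianDensity'' hσ _) x).apply_continuousLinearMap (b i)
  simp_rw [hsecond, ← integral_finsetSum _ fun i _ => hint i, ← Finset.mul_sum,
    sum_gaussianDensity''_apply_self hσ]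

end Laplacian

theorem gaussianMeasure_eq_withDensity (d : ℕ) (σ : ℝ) :
    gaussianMeasure d σ = volume.withDensity fun δ => ENNReal.ofReal (gaussianDensity σ δ) := by
  simp only [gaussianMeasure, gaussianDensity, finrank_euclideanSpace_fin]

theorem integral_gaussianMeasure_add {d : ℕ} {σ : ℝ} (F : EuclideanSpace ℝ (Fin d) → ℝ)
    (x : EuclideanSpace ℝ (Fin d)) :
    ∫ δ, F (x + δ) ∂gaussianMeasure d σ = ∫ y, F y * gaussianDensity σ (x - y) := by
  rw [gaussianMeasure_eq_withDensity, integral_withDensity_eq_integral_toReal_smul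
    continuous_gaussianDensity.measurable.ennreal_ofReal
    (ae_of_all _ fun _ => ENNReal.ofReal_lt_top),
    ← integral_add_left_eq_self (fun y => F y * gaussianDensity σ (x - y)) x]
  congr 1 with δ
  rw [ENNReal.toReal_ofReal (gaussianDensity_nonneg σ δ), smul_eq_mul, sub_add_cancel_left,
    gaussianDensity_neg, mul_comm]

theorem stein_laplacian_general (d : ℕ) (σ : ℝ) (hσ : 0 < σ)
    (f : EuclideanSpace ℝ (Fin d) → ℝ) (hf : Measurable f)
    (C : ℝ) (hbd : ∀ x, |f x| ≤ C)
    (u : EuclideanSpace ℝ (Fin d) → ℝ)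
    (hu : ∀ x, u x = ∫ δ, f (x + δ) ∂(gaussianMeasure d σ)) :
    ∀ x, (∑ i : Fin d,
        fderiv ℝ (fun y => fderiv ℝ u y (EuclideanSpace.single i (1 : ℝ))) x
          (EuclideanSpace.single i (1 : ℝ))) =
      ∫ δ, ((‖δ‖ ^ 2 - σ ^ 2 * d) / σ ^ 4) * f (x + δ) ∂(gaussianMeasure d σ) := by
  intro x
  obtain rfl : u = fun x => ∫ y, f y * gaussianDensity σ (x - y) :=
    funext fun x => (hu x).trans (integral_gaussianMeasure_add f x)
  have hΔ := sum_fderiv_fderiv_integral_mul_gaussianDensity_sub hσ.ne' hf.aestronglyMeasurable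
    (fun y => (Real.norm_eq_abs (f y)).trans_le (hbd y)) (EuclideanSpace.basisFun (Fin d) ℝ) x
  have hrhs := integral_gaussianMeasure_add (σ := σ)
    (fun y => (‖y - x‖ ^ 2 - σ ^ 2 * d) / σ ^ 4 * f y) x
  simp only [EuclideanSpace.basisFun_apply, Fintype.card_fin] at hΔ
  simp only [add_sub_cancel_left] at hrhs
  rw [hΔ, hrhs]
  congr 1 with y
  rw [norm_sub_rev]
  ring

theorem stein_laplacian (d : ℕ) (hd : 0 < d) (σ : ℝ) (hσ : 0 < σ)
    (f : EuclideanSpace ℝ (Fin d) → ℝ) (hf : Measurable f)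
    (C : ℝ) (hbd : ∀ x, |f x| ≤ C)
    (u : EuclideanSpace ℝ (Fin d) → ℝ)
    (hu : ∀ x, u x = ∫ δ, f (x + δ) ∂(gaussianMeasure d σ)) :
    ∀ x, (∑ i : Fin d,
        fderiv ℝ (fun y => fderiv ℝ u y (EuclideanSpace.single i (1 : ℝ))) x
          (EuclideanSpace.single i (1 : ℝ))) =
      ∫ δ, ((‖δ‖ ^ 2 - σ ^ 2 * d) / σ ^ 4) * f (x + δ) ∂(gaussianMeasure d σ) :=
  stein_laplacian_general d σ hσ f hf C hbd u hu
end

section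
/- Let f : ℝ^d → ℝ be a bounded measurable function, σ > 0, and u(x) = E_{δ∼N(0,σ²I)}[f(x+δ)]. Then the antithetic-variable form of Stein's identity holds: ∇u(x) = E_{δ∼N(0,σ²I)}[(δ/(2σ²)) · (f(x+δ) − f(x−δ))] for every x ∈ ℝ^d. -/
/-!
Write `u x = ∫ f y * φ (y - x) dy` with `φ` the Gaussian density, so that all the dependence on
`x` sits in the smooth kernel. Differentiating under the integral sign, with the kernel's
derivative dominated uniformly for `x` in a unit ball by a wider Gaussian, gives Stein's identity
`∇u(x) = σ⁻² E[f(x + δ) δ]`. Since `N(0, σ²I)` is symmetric, `E[f(x - δ) δ] = -E[f(x + δ) δ]`,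
and averaging the two expressions gives the antithetic form.
-/

open MeasureTheory Real

open InnerProductSpace

theorem mul_exp_neg_mul_sq_le {b : ℝ} (hb : 0 < b) (t : ℝ) :
    t * exp (-b * t ^ 2) ≤ (√b)⁻¹ * exp (-(b / 2) * t ^ 2) := by
  have hs : √b * t ≤ exp (b / 2 * t ^ 2) := by
    have : b / 2 * t ^ 2 = (√b * t) ^ 2 / 2 := by rw [mul_pow, sq_sqrt hb.le]; ring
    rw [this]
    nlinarith [add_one_le_exp ((√b * t) ^ 2 / 2), sq_nonneg (√b * t - 1)]
  have hb' : 0 < √b := sqrt_pos.2 hb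
  calc t * exp (-b * t ^ 2) = (√b)⁻¹ * ((√b * t) * exp (-b * t ^ 2)) := by field_simp
    _ ≤ (√b)⁻¹ * (exp (b / 2 * t ^ 2) * exp (-b * t ^ 2)) := by gcongr
    _ = (√b)⁻¹ * exp (-(b / 2) * t ^ 2) := by rw [← exp_add]; ring_nf

theorem exp_neg_mul_sq_norm_sub_le {E : Type*} [SeminormedAddCommGroup E] {b : ℝ} (hb : 0 ≤ b)
    {h : E} (hh : ‖h‖ ≤ 1) (z : E) :
    exp (-b * ‖z - h‖ ^ 2) ≤ exp b * exp (-(b / 2) * ‖z‖ ^ 2) := by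
  have hz : ‖z‖ ≤ ‖z - h‖ + 1 := by
    calc ‖z‖ = ‖(z - h) + h‖ := by rw [sub_add_cancel]
      _ ≤ ‖z - h‖ + 1 := (norm_add_le _ _).trans (by linarith)
  have hsq : ‖z‖ ^ 2 ≤ 2 * ‖z - h‖ ^ 2 + 2 := by
    nlinarith [norm_nonneg z, norm_nonneg (z - h), sq_nonneg (‖z - h‖ - 1)]
  rw [← exp_add]
  gcongr
  nlinarith

theorem norm_mul_exp_neg_mul_sq_norm_sub_le {E : Type*} [SeminormedAddCommGroup E] {b : ℝ}
    (hb : 0 < b) {h : E} (hh : ‖h‖ ≤ 1) (z : E) :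
    ‖z - h‖ * exp (-b * ‖z - h‖ ^ 2) ≤ (√b)⁻¹ * exp (b / 2) * exp (-(b / 4) * ‖z‖ ^ 2) := by
  calc ‖z - h‖ * exp (-b * ‖z - h‖ ^ 2) ≤ (√b)⁻¹ * exp (-(b / 2) * ‖z - h‖ ^ 2) :=
        mul_exp_neg_mul_sq_le hb _
    _ ≤ (√b)⁻¹ * (exp (b / 2) * exp (-(b / 2 / 2) * ‖z‖ ^ 2)) := by
        gcongr; exact exp_neg_mul_sq_norm_sub_le (by positivity) hh z
    _ = (√b)⁻¹ * exp (b / 2) * exp (-(b / 4) * ‖z‖ ^ 2) := by ring_nf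

theorem isNegInvariant_withDensity {G : Type*} [MeasurableSpace G] [AddGroup G] [MeasurableNeg G]
    (μ : Measure G) [μ.IsNegInvariant] {ρ : G → ENNReal} (hρ : ∀ x, ρ (-x) = ρ x) :
    (μ.withDensity ρ).IsNegInvariant := by
  refine ⟨Measure.ext fun s hs => ?_⟩
  rw [Measure.neg_apply, withDensity_apply _ hs.neg, withDensity_apply _ hs,
    ← lintegral_indicator hs.neg, ← lintegral_indicator hs, ← lintegral_neg_eq_self]
  congr 1 with x
  by_cases hx : x ∈ s
  · rw [Set.indicator_of_mem (by simpa using hx), Set.indicator_of_mem hx, hρ]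
  · rw [Set.indicator_of_notMem (by simpa using hx), Set.indicator_of_notMem hx]

theorem integral_half_sub_comp_neg_smul {E : Type*} [NormedAddCommGroup E] [NormedSpace ℝ E]
    [MeasurableSpace E] [MeasurableNeg E] {μ : Measure E} [μ.IsNegInvariant] {g : E → ℝ}
    (hg : Integrable (fun v => g v • v) μ) :
    ∫ v, ((g v - g (-v)) / 2) • v ∂μ = ∫ v, g v • v ∂μ := by
  have hg' : Integrable (fun v => g (-v) • v) μ := by simpa using hg.comp_neg.neg
  have hneg : ∫ v, g (-v) • v ∂μ = -∫ v, g v • v ∂μ := by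
    rw [← integral_neg_eq_self, ← integral_neg]
    simp
  calc ∫ v, ((g v - g (-v)) / 2) • v ∂μ
      = (1 / 2 : ℝ) • (∫ v, g v • v ∂μ - ∫ v, g (-v) • v ∂μ) := by
        rw [← integral_sub hg hg', ← integral_smul]
        congr with v
        module
    _ = ∫ v, g v • v ∂μ := by
        rw [hneg]
        module

section InnerProductSpace

variable {V : Type*} [NormedAddCommGroup V] [InnerProductSpace ℝ V]

theorem hasGradientAt_exp_neg_mul_sq_norm_sub [CompleteSpace V] (a : ℝ) (y x : V) :
    HasGradientAt (fun t => exp (-a * ‖y - t‖ ^ 2))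
      ((2 * a * exp (-a * ‖y - x‖ ^ 2)) • (y - x)) x := by
  have h := (((hasFDerivAt_id x).const_sub y).norm_sq.const_mul (-a)).exp
  refine h.congr_fderiv (ContinuousLinearMap.ext fun v => ?_)
  simp [toDual_apply_apply]
  ring

variable [FiniteDimensional ℝ V] [MeasurableSpace V] [BorelSpace V]

theorem integrable_exp_neg_mul_sq_norm {b : ℝ} (hb : 0 < b) :
    Integrable fun v : V => exp (-b * ‖v‖ ^ 2) := by
  have h := (GaussianFourier.integrable_cexp_neg_mul_sq_norm_add (V := V)
    (b := (b : ℂ)) (by simpa using hb) 0 0).norm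
  refine h.congr (.of_forall fun v => ?_)
  simp [Complex.norm_exp, ← Complex.ofReal_pow]

theorem integrable_norm_mul_exp_neg_mul_sq_norm {b : ℝ} (hb : 0 < b) :
    Integrable fun v : V => ‖v‖ * exp (-b * ‖v‖ ^ 2) := by
  refine ((integrable_exp_neg_mul_sq_norm (half_pos hb)).const_mul (√b)⁻¹).mono' (by fun_prop)
    (.of_forall fun v => ?_)
  rw [norm_of_nonneg (by positivity)]
  exact mul_exp_neg_mul_sq_le hb ‖v‖

theorem hasGradientAt_integral_mul_exp_neg_mul_sq_norm_sub {a C : ℝ} (ha : 0 < a) {g : V → ℝ}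
    (hg : AEStronglyMeasurable g) (hgC : ∀ y, |g y| ≤ C) (x : V) :
    HasGradientAt (fun x => ∫ y, g y * exp (-a * ‖y - x‖ ^ 2))
      (∫ y, (2 * a * g y * exp (-a * ‖y - x‖ ^ 2)) • (y - x)) x := by
  set grad : V → V → V := fun x y => (2 * a * g y * exp (-a * ‖y - x‖ ^ 2)) • (y - x)
  have hC : 0 ≤ C := (abs_nonneg _).trans (hgC x)
  have hderiv : ∀ y x', HasFDerivAt (fun t => g y * exp (-a * ‖y - t‖ ^ 2))
      (toDual ℝ V (grad x' y)) x' := fun y x' => by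
    refine ((hasGradientAt_exp_neg_mul_sq_norm_sub a y x').hasFDerivAt.const_mul (g y)).congr_fderiv
      (ContinuousLinearMap.ext fun v => ?_)
    simp [grad, toDual_apply_apply]
    ring
  have hbound : ∀ y, ∀ x' ∈ Metric.ball x 1, ‖toDual ℝ V (grad x' y)‖ ≤
      2 * a * C * ((√a)⁻¹ * exp (a / 2) * exp (-(a / 4) * ‖y - x‖ ^ 2)) := by
    intro y x' hx'
    have h := norm_mul_exp_neg_mul_sq_norm_sub_le ha (mem_ball_iff_norm.1 hx').le (y - x)
    rw [sub_sub_sub_cancel_right] at h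
    calc ‖toDual ℝ V (grad x' y)‖ = 2 * a * |g y| * (‖y - x'‖ * exp (-a * ‖y - x'‖ ^ 2)) := by
          rw [LinearIsometryEquiv.norm_map, norm_smul]
          simp [abs_of_pos ha]
          ring
      _ ≤ _ := by gcongr; exact hgC y
  have key := hasFDerivAt_integral_of_dominated_of_fderiv_le
    (F' := fun x' y => toDual ℝ V (grad x' y)) (Metric.ball_mem_nhds x one_pos)
    (.of_forall fun x' => by fun_prop)
    (((integrable_exp_neg_mul_sq_norm ha).comp_sub_right x).bdd_mul hg (.of_forall hgC))
    ((toDual ℝ V).continuous.comp_aestronglyMeasurable (by fun_prop)) (.of_forall hbound)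
    ((((integrable_exp_neg_mul_sq_norm (by positivity)).comp_sub_right x).const_mul _).const_mul _)
    (.of_forall fun y x' _ => hderiv y x')
  have hcomm : ∫ y, toDual ℝ V (grad x y) = toDual ℝ V (∫ y, grad x y) :=
    (toDual ℝ V).toLinearIsometry.integral_comp_comm _
  rw [hcomm] at key
  exact key

theorem hasGradientAt_integral_exp_neg_mul_sq_norm_mul_add {a C : ℝ} (ha : 0 < a) {g : V → ℝ}
    (hg : AEStronglyMeasurable g) (hgC : ∀ y, |g y| ≤ C) (x : V) :
    HasGradientAt (fun x => ∫ δ, exp (-a * ‖δ‖ ^ 2) * g (x + δ))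
      (∫ δ, (2 * a * exp (-a * ‖δ‖ ^ 2) * g (x + δ)) • δ) x := by
  convert hasGradientAt_integral_mul_exp_neg_mul_sq_norm_sub ha hg hgC x using 1
  · ext x'
    rw [← integral_sub_right_eq_self _ x']
    simp_rw [add_sub_cancel, mul_comm]
  · rw [← integral_sub_right_eq_self _ x]
    simp_rw [add_sub_cancel, mul_right_comm _ (exp _)]

end InnerProductSpace

theorem integral_gaussianMeasure {E : Type*} [NormedAddCommGroup E] [NormedSpace ℝ E]
    (d : ℕ) (σ : ℝ) (h : EuclideanSpace ℝ (Fin d) → E) :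
    ∫ δ, h δ ∂gaussianMeasure d σ =
      ∫ δ, ((2 * π * σ ^ 2) ^ (-(d : ℝ) / 2) * exp (-‖δ‖ ^ 2 / (2 * σ ^ 2))) • h δ := by
  rw [gaussianMeasure, integral_withDensity_eq_integral_toReal_smul (by fun_prop)
    (.of_forall fun _ => ENNReal.ofReal_lt_top)]
  congr with δ
  rw [ENNReal.toReal_ofReal (by positivity)]

instance isNegInvariant_gaussianMeasure (d : ℕ) (σ : ℝ) : (gaussianMeasure d σ).IsNegInvariant :=
  isNegInvariant_withDensity _ fun δ => by rw [norm_neg]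

theorem integrable_id_gaussianMeasure {d : ℕ} {σ : ℝ} (hσ : σ ≠ 0) :
    Integrable (fun δ => δ) (gaussianMeasure d σ) := by
  rw [gaussianMeasure, integrable_withDensity_iff_integrable_smul' (by fun_prop)
    (.of_forall fun _ => ENNReal.ofReal_lt_top)]
  refine ((integrable_norm_mul_exp_neg_mul_sq_norm (b := (2 * σ ^ 2)⁻¹) (by positivity)).const_mul
    ((2 * π * σ ^ 2) ^ (-(d : ℝ) / 2))).mono' (by fun_prop) (.of_forall fun δ => ?_)
  rw [norm_smul, ENNReal.toReal_ofReal (by positivity), norm_of_nonneg (by positivity)]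
  apply le_of_eq
  field_simp

theorem hasGradientAt_integral_gaussianMeasure_add {d : ℕ} {σ C : ℝ} (hσ : σ ≠ 0)
    {f : EuclideanSpace ℝ (Fin d) → ℝ} (hf : AEStronglyMeasurable f) (hfC : ∀ x, |f x| ≤ C)
    (x : EuclideanSpace ℝ (Fin d)) :
    HasGradientAt (fun x => ∫ δ, f (x + δ) ∂gaussianMeasure d σ)
      (∫ δ, (f (x + δ) / σ ^ 2) • δ ∂gaussianMeasure d σ) x := by
  obtain ⟨c, hc_def⟩ : ∃ c, c = (2 * π * σ ^ 2) ^ (-(d : ℝ) / 2) := ⟨_, rfl⟩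
  obtain ⟨a, ha_def⟩ : ∃ a, a = (2 * σ ^ 2)⁻¹ := ⟨_, rfl⟩
  have hc : 0 ≤ c := hc_def ▸ by positivity
  have ha : 0 < a := ha_def ▸ by positivity
  have hdensity : ∀ δ : EuclideanSpace ℝ (Fin d),
      (2 * π * σ ^ 2) ^ (-(d : ℝ) / 2) * exp (-‖δ‖ ^ 2 / (2 * σ ^ 2)) = c * exp (-a * ‖δ‖ ^ 2) :=
    fun δ => by rw [hc_def, ha_def]; congr 2; ring
  have hcfC : ∀ y, |c * f y| ≤ c * C := fun y => by
    rw [abs_mul, abs_of_nonneg hc]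
    exact mul_le_mul_of_nonneg_left (hfC y) hc
  have hsmoothing : ∀ x', ∫ δ, f (x' + δ) ∂gaussianMeasure d σ =
      ∫ δ, exp (-a * ‖δ‖ ^ 2) * (c * f (x' + δ)) := fun x' => by
    rw [integral_gaussianMeasure]
    congr 1 with δ
    rw [smul_eq_mul, hdensity]
    ring
  have hgradient : ∫ δ, (f (x + δ) / σ ^ 2) • δ ∂gaussianMeasure d σ =
      ∫ δ, (2 * a * exp (-a * ‖δ‖ ^ 2) * (c * f (x + δ))) • δ := by
    rw [integral_gaussianMeasure]
    refine integral_congr_ae (.of_forall fun δ => ?_)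
    dsimp only
    rw [smul_smul, hdensity, ha_def]
    congr 1
    field_simp
  rw [funext hsmoothing, hgradient]
  exact hasGradientAt_integral_exp_neg_mul_sq_norm_mul_add ha (hf.const_mul c) hcfC x

theorem stein_first_order_antithetic_general (d : ℕ) (σ : ℝ) (hσ : 0 < σ)
    (f : EuclideanSpace ℝ (Fin d) → ℝ) (hf : Measurable f)
    (C : ℝ) (hbd : ∀ x, |f x| ≤ C)
    (u : EuclideanSpace ℝ (Fin d) → ℝ)
    (hu : ∀ x, u x = ∫ δ, f (x + δ) ∂(gaussianMeasure d σ)) :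
    ∀ x, gradient u x =
      ∫ δ, ((f (x + δ) - f (x - δ)) / (2 * σ ^ 2)) • δ ∂(gaussianMeasure d σ) := by
  intro x
  have hint : Integrable (fun δ => (f (x + δ) / σ ^ 2) • δ) (gaussianMeasure d σ) := by
    refine ((integrable_id_gaussianMeasure hσ.ne').norm.const_mul (C / σ ^ 2)).mono'
      ((((hf.comp (measurable_const_add x)).div_const _).aestronglyMeasurable).smul
        aestronglyMeasurable_id) (.of_forall fun δ => ?_)
    rw [norm_smul, norm_div, Real.norm_eq_abs, norm_of_nonneg (by positivity)]
    gcongr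
    exact hbd _
  have hstein := hasGradientAt_integral_gaussianMeasure_add hσ.ne' hf.aestronglyMeasurable hbd x
  rw [← funext hu] at hstein
  rw [hstein.gradient, ← integral_half_sub_comp_neg_smul hint]
  refine integral_congr_ae (.of_forall fun δ => ?_)
  dsimp only
  rw [← sub_eq_add_neg]
  congr 1
  ring

theorem stein_first_order_antithetic (d : ℕ) (hd : 0 < d) (σ : ℝ) (hσ : 0 < σ)
    (f : EuclideanSpace ℝ (Fin d) → ℝ) (hf : Measurable f)
    (C : ℝ) (hbd : ∀ x, |f x| ≤ C)
    (u : EuclideanSpace ℝ (Fin d) → ℝ)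
    (hu : ∀ x, u x = ∫ δ, f (x + δ) ∂(gaussianMeasure d σ)) :
    ∀ x, gradient u x =
      ∫ δ, ((f (x + δ) - f (x - δ)) / (2 * σ ^ 2)) • δ ∂(gaussianMeasure d σ) :=
  stein_first_order_antithetic_general d σ hσ f hf C hbd u hu
end
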